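/- arXiv:1004.1511 — 5 statements merged into one kernel-verified Lean document; each statement's English description precedes it below -/
import Mathlib

section
/- The set C of all vectors in {-1,0,1}^n containing an even number of zero entries has minimum d_1-distance at least 2 and cardinality (3^n + 1)/2. -/
open Finset

/-- The `d₁`-distance: `∑ i, |x i - y i|`. -/
def d1 {n : ℕ} (x y : Fin n → ℤ) : ℕ := ∑ i, (x i - y i).natAbs

/-- `x` is a vector over the ternary alphabet `Q = {-1, 0, 1}`. -/
def isQ {n : ℕ} (x : Fin n → ℤ) : Prop := ∀ i, x i = -1 ∨ x i = 0 ∨ x i = 1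

/-!
Over `Q = {-1, 0, 1}` the letter `a` is odd exactly when it is nonzero, so `|a - b| ≡ [a = 0] + [b = 0]`
(mod 2) and `d₁(x, y)` has the parity of the total number of zeros of `x` and `y`. Two distinct words
with an even number of zeros are therefore at even, positive distance. For the size, the signed count
`∑_{x ∈ Qⁿ} (-1)^{#zeros x}` factors as `(1 - 1 + 1)ⁿ = 1`, so the even words outnumber the odd ones
by exactly one.
-/

def zeroCount {ι : Type*} [Fintype ι] (x : ι → ℤ) : ℕ := #(univ.filter fun i => x i = 0)

def ternaryCube (n : ℕ) : Finset (Fin n → ℤ) := Fintype.piFinset fun _ => {-1, 0, 1}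

lemma mem_ternaryCube {n : ℕ} {x : Fin n → ℤ} : x ∈ ternaryCube n ↔ isQ x := by
  simp [ternaryCube, isQ]

lemma card_ternaryCube (n : ℕ) : #(ternaryCube n) = 3 ^ n := by
  simp [ternaryCube]

section Distance

variable {n : ℕ}

lemma d1_pos_of_ne {x y : Fin n → ℤ} (hxy : x ≠ y) : 0 < d1 x y := by
  obtain ⟨i, hi⟩ := Function.ne_iff.mp hxy
  calc 0 < (x i - y i).natAbs := Int.natAbs_pos.mpr (sub_ne_zero.mpr hi)
    _ ≤ d1 x y := single_le_sum (f := fun i => (x i - y i).natAbs) (fun _ _ => Nat.zero_le _)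
      (mem_univ i)

lemma natAbs_sub_mod_two {a b : ℤ} (ha : a = -1 ∨ a = 0 ∨ a = 1) (hb : b = -1 ∨ b = 0 ∨ b = 1) :
    (a - b).natAbs % 2 = ((if a = 0 then 1 else 0) + (if b = 0 then 1 else 0)) % 2 := by
  rcases ha with rfl | rfl | rfl <;> rcases hb with rfl | rfl | rfl <;> rfl

lemma d1_mod_two {x y : Fin n → ℤ} (hx : isQ x) (hy : isQ y) :
    d1 x y % 2 = (zeroCount x + zeroCount y) % 2 := by
  rw [d1, sum_nat_mod, sum_congr rfl fun i _ => natAbs_sub_mod_two (hx i) (hy i), ← sum_nat_mod,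
    sum_add_distrib, ← card_filter, ← card_filter, zeroCount, zeroCount]

lemma even_d1 {x y : Fin n → ℤ} (hx : isQ x) (hy : isQ y) (hx₀ : Even (zeroCount x))
    (hy₀ : Even (zeroCount y)) : Even (d1 x y) := by
  rw [Nat.even_iff, d1_mod_two hx hy, ← Nat.even_iff]
  exact hx₀.add hy₀

end Distance

lemma sum_neg_one_pow_eq_card_even_sub_card_odd {α : Type*} (s : Finset α) (f : α → ℕ) :
    ∑ x ∈ s, (-1 : ℤ) ^ f x = #(s.filter fun x => Even (f x)) - #(s.filter fun x => ¬Even (f x)) := by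
  have hterm : ∀ x, (-1 : ℤ) ^ f x = if Even (f x) then 1 else -1 := fun x => by
    split_ifs with h
    · exact h.neg_one_pow
    · exact (Nat.not_even_iff_odd.mp h).neg_one_pow
  simp only [hterm, sum_ite, sum_const, smul_neg, nsmul_eq_mul, mul_one, sub_eq_add_neg]

lemma sum_neg_one_pow_zeroCount (n : ℕ) :
    ∑ x ∈ ternaryCube n, (-1 : ℤ) ^ zeroCount x = 1 := by
  have hterm : ∀ x : Fin n → ℤ, (-1 : ℤ) ^ zeroCount x = ∏ i, if x i = 0 then -1 else 1 := by
    intro x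
    rw [zeroCount, ← prod_const, prod_filter]
  simp_rw [hterm]
  rw [ternaryCube, ← prod_univ_sum (fun _ => ({-1, 0, 1} : Finset ℤ))
    fun _ q => if q = 0 then (-1 : ℤ) else 1]
  simp

lemma card_filter_even_zeroCount (n : ℕ) :
    #((ternaryCube n).filter fun x => Even (zeroCount x)) = (3 ^ n + 1) / 2 := by
  have htotal := card_filter_add_card_filter_not (s := ternaryCube n) (fun x => Even (zeroCount x))
  have hdiff := sum_neg_one_pow_eq_card_even_sub_card_odd (ternaryCube n) zeroCount
  rw [sum_neg_one_pow_zeroCount, card_ternaryCube] at *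
  omega

/-- The set of words in `Q^n` with an even number of zero entries has minimum
`d₁`-distance at least `2` and cardinality `(3^n + 1)/2`. -/
theorem stmt_9 (n : ℕ)
    (C : Set (Fin n → ℤ))
    (hC : C = {x | isQ x ∧ Even (Finset.univ.filter (fun i => x i = 0)).card}) :
    (∀ x ∈ C, ∀ y ∈ C, x ≠ y → 2 ≤ d1 x y) ∧ C.ncard = (3 ^ n + 1) / 2 := by
  subst hC
  constructor
  · rintro x ⟨hx, hx₀⟩ y ⟨hy, hy₀⟩ hxy
    obtain ⟨k, hk⟩ := even_d1 hx hy hx₀ hy₀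
    have := d1_pos_of_ne hxy
    omega
  · have hC : {x : Fin n → ℤ | isQ x ∧ Even (zeroCount x)} =
        ↑((ternaryCube n).filter fun x => Even (zeroCount x)) := by
      ext x
      simp [mem_ternaryCube]
    rw [← card_filter_even_zeroCount n, ← Set.ncard_coe_finset, ← hC]
    rfl
end

section
/- T(n,d) ≤ A_2(2n, d), where A_2(2n,d) is the maximum size of a binary code of length 2n with minimum Hamming distance at least d. -/
/-! The map `φ` is a `d₁`-to-Hamming isometry on `Q^n`, hence injective there, so it sends a
ternary code of minimum `d₁`-distance `d` to a binary code of length `2n`, the same size and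
minimum Hamming distance `d`. -/

open Finset

/-- `T n d`: the maximum size of a code in `Q^n` with minimum `d₁`-distance at least `d`. -/
noncomputable def T (n d : ℕ) : ℕ :=
  sSup {m | ∃ C : Finset (Fin n → ℤ), (∀ x ∈ C, isQ x) ∧
    (∀ x ∈ C, ∀ y ∈ C, x ≠ y → d ≤ d1 x y) ∧ C.card = m}

/-- `A2 n e`: the maximum size of a binary code of length `n` with minimum
Hamming distance at least `e`. -/
noncomputable def A2 (n e : ℕ) : ℕ :=
  sSup {m | ∃ C : Finset (Fin n → Fin 2),
    (∀ x ∈ C, ∀ y ∈ C, x ≠ y → e ≤ hammingDist x y) ∧ C.card = m}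

/-- `A3 n e`: the maximum size of a ternary code (over `Q`) of length `n` with minimum
Hamming distance at least `e`. -/
noncomputable def A3 (n e : ℕ) : ℕ :=
  sSup {m | ∃ C : Finset (Fin n → ℤ), (∀ x ∈ C, isQ x) ∧
    (∀ x ∈ C, ∀ y ∈ C, x ≠ y → e ≤ hammingDist x y) ∧ C.card = m}

section Hamming

variable {ι κ β : Type*} [Fintype ι] [Fintype κ] [DecidableEq β]

theorem hammingDist_comp_equiv (e : κ ≃ ι) (x y : ι → β) :
    hammingDist (x ∘ e) (y ∘ e) = hammingDist x y := by
  simp only [hammingDist, card_filter, Function.comp_apply]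
  exact e.sum_comp fun i => if x i ≠ y i then 1 else 0

theorem hammingDist_uncurry (x y : ι → κ → β) :
    hammingDist (Function.uncurry x) (Function.uncurry y) = ∑ i, hammingDist (x i) (y i) := by
  simp only [hammingDist, card_filter]
  exact Fintype.sum_prod_type _

end Hamming

def tritBits (a : ℤ) : Fin 2 → Fin 2 :=
  ![if a = 1 then 1 else 0, if a = -1 then 1 else 0]

theorem hammingDist_tritBits {a b : ℤ} (ha : a = -1 ∨ a = 0 ∨ a = 1)
    (hb : b = -1 ∨ b = 0 ∨ b = 1) : hammingDist (tritBits a) (tritBits b) = (a - b).natAbs := by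
  rcases ha with rfl | rfl | rfl <;> rcases hb with rfl | rfl | rfl <;> decide

/-- The map `φ` applied componentwise: coordinate `(i, j) : Fin n × Fin 2` of `Fin (2 * n)` is
bit `j` of `tritBits (x i)`. -/
def encode {n : ℕ} (x : Fin n → ℤ) : Fin (2 * n) → Fin 2 :=
  Function.uncurry (fun i => tritBits (x i)) ∘ ((Equiv.prodComm _ _).trans finProdFinEquiv).symm

theorem hammingDist_encode {n : ℕ} {x y : Fin n → ℤ} (hx : isQ x) (hy : isQ y) :
    hammingDist (encode x) (encode y) = d1 x y := by
  rw [encode, encode, hammingDist_comp_equiv, hammingDist_uncurry]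
  exact sum_congr rfl fun i _ => hammingDist_tritBits (hx i) (hy i)

theorem eq_of_d1_eq_zero {n : ℕ} {x y : Fin n → ℤ} (h : d1 x y = 0) : x = y := by
  funext i
  have := (sum_eq_zero_iff.1 h) i (mem_univ i)
  omega

theorem encode_injOn {n : ℕ} : Set.InjOn (encode (n := n)) {x | isQ x} := fun x hx y hy h =>
  eq_of_d1_eq_zero <| by rw [← hammingDist_encode hx hy, h, hammingDist_self]

/-- `T(n,d) ≤ A₂(2n,d)`. -/
theorem stmt_12 (n d : ℕ) : T n d ≤ A2 (2 * n) d := by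
  apply csSup_le_csSup
  · refine ⟨Fintype.card (Fin (2 * n) → Fin 2), ?_⟩
    rintro m ⟨C, -, rfl⟩
    exact card_le_univ C
  · exact ⟨0, ∅, by simp⟩
  · rintro m ⟨C, hQ, hd, rfl⟩
    refine ⟨C.image encode, ?_, card_image_of_injOn (encode_injOn.mono fun x hx => hQ x hx)⟩
    simp only [mem_image]
    rintro _ ⟨x, hx, rfl⟩ _ ⟨y, hy, rfl⟩ hne
    rw [hammingDist_encode (hQ x hx) (hQ y hy)]
    exact hd x hx y hy (ne_of_apply_ne encode hne)
end

section
/- Let C be a binary code of length n with minimum Hamming distance at least d, and let A_w denote the number of codewords of C of Hamming weight w. Then T(n,d) ≥ Σ_{w=0}^n A_w · A_2(w, ⌈d/2⌉). -/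
/-!
Concatenation: on the support of each codeword `c` of the binary code `C`, place the words of an
optimal binary code of length `wt c` and distance `⌈d/2⌉`, written with the signs `±1`, and put
`0` elsewhere. Two words coming from the same `c` differ by `2` in each coordinate where their
sign patterns differ and agree elsewhere, so their `d₁`-distance is at least `2⌈d/2⌉ ≥ d`. Two
words coming from `c ≠ c'` have zero patterns `c` and `c'`, so they differ in at least
`dist(c, c') ≥ d` coordinates. Distinct codewords of `C` give disjoint families, so the resulting
code in `Q^n` has `∑_c A₂(wt c, ⌈d/2⌉)` words.
-/
open Finset

open Function

lemma exists_code_card_eq_A2 (w e : ℕ) :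
    ∃ D : Finset (Fin w → Fin 2),
      (∀ x ∈ D, ∀ y ∈ D, x ≠ y → e ≤ hammingDist x y) ∧ D.card = A2 w e := by
  refine Nat.sSup_mem (s := {m | ∃ D : Finset (Fin w → Fin 2),
    (∀ x ∈ D, ∀ y ∈ D, x ≠ y → e ≤ hammingDist x y) ∧ D.card = m})
    ⟨0, ∅, by simp⟩ ⟨Fintype.card (Fin w → Fin 2), ?_⟩
  rintro m ⟨D, -, rfl⟩
  exact card_le_univ D

lemma card_le_T {n d : ℕ} {C : Finset (Fin n → ℤ)} (hQ : ∀ x ∈ C, isQ x)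
    (hC : ∀ x ∈ C, ∀ y ∈ C, x ≠ y → d ≤ d1 x y) : #C ≤ T n d := by
  refine le_csSup ⟨#(Fintype.piFinset fun _ : Fin n => ({-1, 0, 1} : Finset ℤ)), ?_⟩
    ⟨C, hQ, hC, rfl⟩
  rintro m ⟨C', hC'Q, -, rfl⟩
  refine card_le_card fun x hx => Fintype.mem_piFinset.mpr fun i => ?_
  rcases hC'Q x hx i with h | h | h <;> simp [h]

lemma d1_self {n : ℕ} (x : Fin n → ℤ) : d1 x x = 0 := by
  simp [d1]

lemma hammingDist_le_d1 {n : ℕ} (x y : Fin n → ℤ) : hammingDist x y ≤ d1 x y := by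
  rw [hammingDist, card_filter]
  refine sum_le_sum fun i _ => ?_
  split_ifs with h
  · exact Int.natAbs_pos.mpr (sub_ne_zero.mpr h)
  · exact Nat.zero_le _

lemma d1_extend_zero {m n : ℕ} {e : Fin m → Fin n} (he : Injective e) (x y : Fin m → ℤ) :
    d1 (extend e x 0) (extend e y 0) = d1 x y := by
  refine (Fintype.sum_of_injective e he _ _ (fun i hi => ?_) fun j => ?_).symm
  · rw [extend_apply' _ _ _ hi, extend_apply' _ _ _ hi]
    rfl
  · rw [he.extend_apply, he.extend_apply]

def toSign (a : Fin 2) : ℤ := 2 * a.val - 1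

lemma toSign_ne_zero (a : Fin 2) : toSign a ≠ 0 := by
  fin_cases a <;> decide

lemma natAbs_toSign_sub (a b : Fin 2) :
    (toSign a - toSign b).natAbs = 2 * if a ≠ b then 1 else 0 := by
  fin_cases a <;> fin_cases b <;> decide

lemma d1_toSign {n : ℕ} (x y : Fin n → Fin 2) :
    d1 (fun i => toSign (x i)) (fun i => toSign (y i)) = 2 * hammingDist x y := by
  simp only [d1, natAbs_toSign_sub, hammingDist, card_filter, mul_sum]

section FillSupport

variable {n : ℕ}

def supportEmb (c : Fin n → Fin 2) : Fin (hammingNorm c) ↪o Fin n :=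
  Finset.orderEmbOfFin {i | c i ≠ 0} rfl

lemma mem_range_supportEmb {c : Fin n → Fin 2} {i : Fin n} :
    i ∈ Set.range (supportEmb c) ↔ c i ≠ 0 := by
  simp [supportEmb, range_orderEmbOfFin]

noncomputable def fillSupport (c : Fin n → Fin 2) (b : Fin (hammingNorm c) → Fin 2) :
    Fin n → ℤ :=
  extend (supportEmb c) (fun j => toSign (b j)) 0

lemma fillSupport_supportEmb (c : Fin n → Fin 2) (b : Fin (hammingNorm c) → Fin 2)
    (j : Fin (hammingNorm c)) : fillSupport c b (supportEmb c j) = toSign (b j) :=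
  (supportEmb c).injective.extend_apply _ _ _

lemma fillSupport_of_eq_zero {c : Fin n → Fin 2} (b : Fin (hammingNorm c) → Fin 2) {i : Fin n}
    (hi : c i = 0) : fillSupport c b i = 0 :=
  extend_apply' _ _ _ fun h => mem_range_supportEmb.mp h hi

lemma isQ_fillSupport (c : Fin n → Fin 2) (b : Fin (hammingNorm c) → Fin 2) :
    isQ (fillSupport c b) := by
  intro i
  by_cases hi : c i = 0
  · simp [fillSupport_of_eq_zero b hi]
  · obtain ⟨j, rfl⟩ := mem_range_supportEmb.mpr hi
    rw [fillSupport_supportEmb, toSign]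
    generalize b j = a
    fin_cases a <;> decide

lemma fillSupport_eq_zero_iff {c : Fin n → Fin 2} {b : Fin (hammingNorm c) → Fin 2}
    {i : Fin n} : fillSupport c b i = 0 ↔ c i = 0 := by
  refine ⟨fun h => ?_, fillSupport_of_eq_zero b⟩
  by_contra hi
  obtain ⟨j, rfl⟩ := mem_range_supportEmb.mpr hi
  exact toSign_ne_zero (b j) (fillSupport_supportEmb c b j ▸ h)

lemma fillSupport_zero_pattern (c : Fin n → Fin 2) (b : Fin (hammingNorm c) → Fin 2) :
    (fun i => if fillSupport c b i = 0 then 0 else 1) = c := by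
  funext i
  simp only [fillSupport_eq_zero_iff]
  generalize c i = a
  fin_cases a <;> rfl

lemma hammingDist_le_hammingDist_fillSupport (c c' : Fin n → Fin 2)
    (b : Fin (hammingNorm c) → Fin 2) (b' : Fin (hammingNorm c') → Fin 2) :
    hammingDist c c' ≤ hammingDist (fillSupport c b) (fillSupport c' b') := by
  have := hammingDist_comp_le_hammingDist (fun _ (z : ℤ) => if z = 0 then (0 : Fin 2) else 1)
    (x := fillSupport c b) (y := fillSupport c' b')
  rwa [fillSupport_zero_pattern, fillSupport_zero_pattern] at this

lemma eq_of_fillSupport_eq {c c' : Fin n → Fin 2} {b : Fin (hammingNorm c) → Fin 2}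
    {b' : Fin (hammingNorm c') → Fin 2} (h : fillSupport c b = fillSupport c' b') : c = c' := by
  have := hammingDist_le_hammingDist_fillSupport c c' b b'
  rw [h, hammingDist_self] at this
  exact hammingDist_eq_zero.mp (Nat.le_zero.mp this)

lemma d1_fillSupport (c : Fin n → Fin 2) (b b' : Fin (hammingNorm c) → Fin 2) :
    d1 (fillSupport c b) (fillSupport c b') = 2 * hammingDist b b' := by
  rw [fillSupport, fillSupport, d1_extend_zero (supportEmb c).injective, d1_toSign]

lemma fillSupport_injective (c : Fin n → Fin 2) : Injective (fillSupport c) := by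
  intro b b' h
  have := d1_fillSupport c b b'
  rw [h, d1_self] at this
  exact hammingDist_eq_zero.mp (by omega)

end FillSupport

lemma sum_card_filter_hammingNorm_mul {n : ℕ} (C : Finset (Fin n → Fin 2)) (f : ℕ → ℕ) :
    ∑ w ∈ range (n + 1), #(C.filter fun c => hammingNorm c = w) * f w =
      ∑ c ∈ C, f (hammingNorm c) := by
  have hmaps : ∀ c ∈ C, hammingNorm c ∈ range (n + 1) := fun c _ =>
    mem_range_succ_iff.mpr ((card_le_univ _).trans_eq (Fintype.card_fin n))
  rw [← sum_fiberwise_of_maps_to hmaps]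
  refine sum_congr rfl fun w _ => ?_
  rw [sum_congr rfl fun c hc => by rw [(mem_filter.mp hc).2], sum_const, smul_eq_mul]

section Concatenation

variable {n d : ℕ} {C : Finset (Fin n → Fin 2)} {D : ∀ w, Finset (Fin w → Fin 2)}

noncomputable def concatCode (C : Finset (Fin n → Fin 2)) (D : ∀ w, Finset (Fin w → Fin 2)) :
    Finset (Fin n → ℤ) :=
  C.biUnion fun c => (D (hammingNorm c)).image (fillSupport c)

lemma mem_concatCode {x : Fin n → ℤ} :
    x ∈ concatCode C D ↔ ∃ c ∈ C, ∃ b ∈ D (hammingNorm c), fillSupport c b = x := by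
  simp [concatCode]

lemma card_concatCode : #(concatCode C D) = ∑ c ∈ C, #(D (hammingNorm c)) := by
  rw [concatCode, card_biUnion]
  · exact sum_congr rfl fun c _ => card_image_of_injective _ (fillSupport_injective c)
  · intro c _ c' _ hcc
    simp only [disjoint_left, mem_image]
    rintro _ ⟨b, -, rfl⟩ ⟨b', -, h⟩
    exact hcc (eq_of_fillSupport_eq h.symm)

lemma isQ_of_mem_concatCode {x : Fin n → ℤ} (hx : x ∈ concatCode C D) : isQ x := by
  obtain ⟨c, -, b, -, rfl⟩ := mem_concatCode.mp hx
  exact isQ_fillSupport c b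

lemma le_d1_of_mem_concatCode (hC : ∀ x ∈ C, ∀ y ∈ C, x ≠ y → d ≤ hammingDist x y)
    (hD : ∀ w, ∀ x ∈ D w, ∀ y ∈ D w, x ≠ y → (d + 1) / 2 ≤ hammingDist x y)
    {x y : Fin n → ℤ} (hx : x ∈ concatCode C D) (hy : y ∈ concatCode C D) (hxy : x ≠ y) :
    d ≤ d1 x y := by
  obtain ⟨c, hc, b, hb, rfl⟩ := mem_concatCode.mp hx
  obtain ⟨c', hc', b', hb', rfl⟩ := mem_concatCode.mp hy
  by_cases hcc : c = c'
  · subst hcc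
    have hbb : (d + 1) / 2 ≤ hammingDist b b' := hD _ b hb b' hb' fun h => hxy (h ▸ rfl)
    rw [d1_fillSupport]
    omega
  · calc d ≤ hammingDist c c' := hC c hc c' hc' hcc
      _ ≤ hammingDist (fillSupport c b) (fillSupport c' b') :=
        hammingDist_le_hammingDist_fillSupport c c' b b'
      _ ≤ d1 (fillSupport c b) (fillSupport c' b') := hammingDist_le_d1 _ _

end Concatenation

/-- If `C` is a binary code of length `n` with minimum Hamming distance at least `d`
and `A_w` codewords of Hamming weight `w`, then `T(n,d) ≥ ∑_w A_w · A₂(w,⌈d/2⌉)`. -/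
theorem stmt_14 (n d : ℕ) (C : Finset (Fin n → Fin 2))
    (hC : ∀ x ∈ C, ∀ y ∈ C, x ≠ y → d ≤ hammingDist x y) :
    ∑ w ∈ Finset.range (n + 1),
      (C.filter (fun c => hammingNorm c = w)).card * A2 w ((d + 1) / 2) ≤ T n d := by
  choose D hD hDcard using fun w => exists_code_card_eq_A2 w ((d + 1) / 2)
  calc ∑ w ∈ Finset.range (n + 1),
        (C.filter (fun c => hammingNorm c = w)).card * A2 w ((d + 1) / 2)
      = ∑ c ∈ C, A2 (hammingNorm c) ((d + 1) / 2) := sum_card_filter_hammingNorm_mul C _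
    _ = #(concatCode C D) := by simp only [card_concatCode, hDcard]
    _ ≤ T n d := card_le_T (fun _ hx => isQ_of_mem_concatCode hx)
        fun _ hx _ hy => le_d1_of_mem_concatCode hC hD hx hy
end

section
/- Plotkin bound for d_1-distance: if C ⊆ {-1,0,1}^n is a code with minimum d_1-distance at least d, d > n, then |C| ≤ d/(d−n). -/
open Finset

/-!
Sum `S = ∑_{x,y ∈ C} d₁(x, y)` over ordered pairs. Every off-diagonal pair contributes at
least `d`, so `M (M - 1) d ≤ S` with `M = |C|`. On `{-1, 0, 1}` one has `|a - b| ≤ 1 - ab`,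
hence `d₁(x, y) ≤ n - ⟨x, y⟩`, and summing gives `S ≤ n M² - ‖∑_{x ∈ C} x‖² ≤ n M²`.
Thus `(M - 1) d ≤ n M`, i.e. `M (d - n) ≤ d`.
-/

lemma card_mul_card_sub_one_mul_le_sum_sum {α : Type*} [DecidableEq α] (C : Finset α)
    (f : α → α → ℕ) {d : ℕ} (hd : ∀ x ∈ C, ∀ y ∈ C, x ≠ y → d ≤ f x y) :
    #C * (#C - 1) * d ≤ ∑ x ∈ C, ∑ y ∈ C, f x y := by
  rw [Nat.mul_sub_one, ← offDiag_card, ← smul_eq_mul, ← sum_product' (f := f)]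
  calc #C.offDiag • d ≤ ∑ p ∈ C.offDiag, f p.1 p.2 :=
        card_nsmul_le_sum _ _ _ fun p hp => by
          obtain ⟨hx, hy, hne⟩ := mem_offDiag.mp hp
          exact hd _ hx _ hy hne
    _ ≤ ∑ p ∈ C ×ˢ C, f p.1 p.2 :=
        sum_le_sum_of_subset (product_sdiff_diag (s := C) ▸ sdiff_subset)

lemma sum_sum_dotProduct_nonneg {ι R : Type*} [Fintype ι] [CommRing R] [LinearOrder R]
    [IsStrictOrderedRing R] (C : Finset (ι → R)) :
    0 ≤ ∑ x ∈ C, ∑ y ∈ C, x ⬝ᵥ y := by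
  have hsum : ∑ x ∈ C, ∑ y ∈ C, x ⬝ᵥ y = (∑ x ∈ C, x) ⬝ᵥ (∑ y ∈ C, y) := by
    rw [sum_dotProduct]
    simp only [dotProduct_sum]
  rw [hsum]
  exact sum_nonneg fun i _ => mul_self_nonneg _

lemma natAbs_sub_le_one_sub_mul {a b : ℤ} (ha : a = -1 ∨ a = 0 ∨ a = 1)
    (hb : b = -1 ∨ b = 0 ∨ b = 1) : ((a - b).natAbs : ℤ) ≤ 1 - a * b := by
  rcases ha with rfl | rfl | rfl <;> rcases hb with rfl | rfl | rfl <;> decide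

lemma d1_le_sub_dotProduct {n : ℕ} {x y : Fin n → ℤ} (hx : isQ x) (hy : isQ y) :
    (d1 x y : ℤ) ≤ n - x ⬝ᵥ y :=
  calc (d1 x y : ℤ) = ∑ i, ((x i - y i).natAbs : ℤ) := by simp [d1]
    _ ≤ ∑ i, (1 - x i * y i) := sum_le_sum fun i _ => natAbs_sub_le_one_sub_mul (hx i) (hy i)
    _ = n - x ⬝ᵥ y := by simp [sum_sub_distrib, dotProduct]

lemma sum_sum_d1_le {n : ℕ} {C : Finset (Fin n → ℤ)} (hQ : ∀ x ∈ C, isQ x) :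
    ∑ x ∈ C, ∑ y ∈ C, d1 x y ≤ n * #C * #C := by
  zify
  calc ∑ x ∈ C, ∑ y ∈ C, (d1 x y : ℤ) ≤ ∑ x ∈ C, ∑ y ∈ C, ((n : ℤ) - x ⬝ᵥ y) :=
        sum_le_sum fun x hx => sum_le_sum fun y hy => d1_le_sub_dotProduct (hQ x hx) (hQ y hy)
    _ = n * #C * #C - ∑ x ∈ C, ∑ y ∈ C, x ⬝ᵥ y := by
        simp only [sum_sub_distrib, sum_const, nsmul_eq_mul]
        ring
    _ ≤ n * #C * #C := sub_le_self _ (sum_sum_dotProduct_nonneg C)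

/-- Plotkin bound for the `d₁`-distance: if `d > n` then any code in `Q^n` with minimum
`d₁`-distance at least `d` has at most `d/(d-n)` codewords. -/
theorem stmt_15 (n d : ℕ) (hnd : n < d) (C : Finset (Fin n → ℤ))
    (hQ : ∀ x ∈ C, isQ x)
    (hd : ∀ x ∈ C, ∀ y ∈ C, x ≠ y → d ≤ d1 x y) :
    (C.card : ℚ) ≤ (d : ℚ) / ((d : ℚ) - (n : ℚ)) := by
  have hdn : (0 : ℚ) < d - n := sub_pos.mpr (by exact_mod_cast hnd)
  rcases (#C).eq_zero_or_pos with hC | hC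
  · rw [hC, Nat.cast_zero]
    positivity
  have hpairs : #C * ((#C - 1) * d) ≤ #C * (n * #C) := by
    linarith [card_mul_card_sub_one_mul_le_sum_sum C d1 hd, sum_sum_d1_le hQ]
  have hrow : ((#C : ℚ) - 1) * d ≤ n * #C := by
    rw [← Nat.cast_one, ← Nat.cast_sub hC]
    exact_mod_cast Nat.le_of_mul_le_mul_left hpairs hC
  rw [le_div_iff₀ hdn]
  linarith
end

section
/- T(d,d) ≤ 2d + 1/2 + √(2d + 1/4): any code in {-1,0,1}^d with minimum d_1-distance at least d has at most 2d + 1/2 + √(2d+1/4) codewords. -/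
/-!
Summing `d₁` over ordered pairs of an `M`-word code in `Q^d` gives at least `M (M - 1) d`.
If `σ` codewords are nonzero in a coordinate, the identity `2 |u - v| = (u - v)² + (u² - v²)²`
on `Q` bounds that coordinate's pair sum by `2 M σ - σ²` (and always by `M²`). The codewords
sharing a symbol in some coordinate gain no distance there, so the same averaging (Plotkin) allows
at most `d` of them; hence `σ ≤ 2d`, and for `M ≥ 2d` each coordinate contributes at most
`4 d (M - d)`. So `M (M - 1) ≤ 4 d (M - d)`, whose larger root in `M` is `2d + 1/2 + √(2d + 1/4)`.
-/

open Finset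

theorem two_mul_abs_sub_eq {u v : ℤ} (hu : u = -1 ∨ u = 0 ∨ u = 1)
    (hv : v = -1 ∨ v = 0 ∨ v = 1) : 2 * |u - v| = (u - v) ^ 2 + (u ^ 2 - v ^ 2) ^ 2 := by
  rcases hu with rfl | rfl | rfl <;> rcases hv with rfl | rfl | rfl <;> decide

theorem sum_sum_sub_sq {α R : Type*} [CommRing R] (s : Finset α) (f : α → R) :
    ∑ x ∈ s, ∑ y ∈ s, (f x - f y) ^ 2 =
      2 * #s * ∑ x ∈ s, f x ^ 2 - 2 * (∑ x ∈ s, f x) ^ 2 := by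
  simp only [sub_sq, sum_add_distrib, sum_sub_distrib, sum_const, nsmul_eq_mul, ← mul_sum,
    ← sum_mul]
  ring

theorem sum_sum_abs_sub_le {α : Type*} (s : Finset α) (f : α → ℤ)
    (hf : ∀ x ∈ s, f x = -1 ∨ f x = 0 ∨ f x = 1) :
    ∑ x ∈ s, ∑ y ∈ s, |f x - f y| ≤
      2 * #s * ∑ x ∈ s, f x ^ 2 - (∑ x ∈ s, f x ^ 2) ^ 2 := by
  have hsplit : 2 * ∑ x ∈ s, ∑ y ∈ s, |f x - f y| =
      ∑ x ∈ s, ∑ y ∈ s, (f x - f y) ^ 2 + ∑ x ∈ s, ∑ y ∈ s, (f x ^ 2 - f y ^ 2) ^ 2 := by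
    simp only [mul_sum, ← sum_add_distrib]
    exact sum_congr rfl fun x hx => sum_congr rfl fun y hy =>
      two_mul_abs_sub_eq (hf x hx) (hf y hy)
  have hidem : ∀ x ∈ s, (f x ^ 2) ^ 2 = f x ^ 2 := fun x hx => by
    rcases hf x hx with h | h | h <;> rw [h] <;> norm_num
  have hlin := sum_sum_sub_sq s f
  have hsq := sum_sum_sub_sq s (f · ^ 2)
  rw [sum_congr rfl hidem] at hsq
  nlinarith [sq_nonneg (∑ x ∈ s, f x)]

theorem sum_sum_abs_sub_le_card_sq {α : Type*} (s : Finset α) (f : α → ℤ)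
    (hf : ∀ x ∈ s, f x = -1 ∨ f x = 0 ∨ f x = 1) :
    ∑ x ∈ s, ∑ y ∈ s, |f x - f y| ≤ #s ^ 2 := by
  nlinarith [sum_sum_abs_sub_le s f hf, sq_nonneg ((#s : ℤ) - ∑ x ∈ s, f x ^ 2)]

theorem natCast_d1 {n : ℕ} (x y : Fin n → ℤ) : (d1 x y : ℤ) = ∑ i, |x i - y i| := by
  simp [d1]

theorem card_mul_card_sub_one_mul_le_sum_sum_abs_sub {n : ℕ} (d : ℕ) (s : Finset (Fin n → ℤ))
    (hd : ∀ x ∈ s, ∀ y ∈ s, x ≠ y → d ≤ d1 x y) :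
    (#s : ℤ) * (#s - 1) * d ≤ ∑ i, ∑ x ∈ s, ∑ y ∈ s, |x i - y i| := by
  have hrow : ∀ x ∈ s, ((#s : ℤ) - 1) * d ≤ ∑ y ∈ s, (d1 x y : ℤ) := by
    intro x hx
    rw [← sum_erase (f := fun y => (d1 x y : ℤ)) (a := x) s (by simp [d1])]
    have := card_nsmul_le_sum (s.erase x) (fun y => (d1 x y : ℤ)) d fun y hy => by
      exact_mod_cast hd x hx y (mem_of_mem_erase hy) (ne_of_mem_erase hy).symm
    rwa [card_erase_of_mem hx, nsmul_eq_mul, Nat.cast_sub (card_pos.2 ⟨x, hx⟩),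
      Nat.cast_one] at this
  calc (#s : ℤ) * (#s - 1) * d = ∑ _x ∈ s, ((#s : ℤ) - 1) * d := by
        rw [sum_const, nsmul_eq_mul, mul_assoc]
    _ ≤ ∑ x ∈ s, ∑ y ∈ s, (d1 x y : ℤ) := sum_le_sum hrow
    _ = ∑ i, ∑ x ∈ s, ∑ y ∈ s, |x i - y i| := by
        simp only [natCast_d1]
        exact (sum_congr rfl fun _ _ => sum_comm).trans sum_comm

theorem card_le_of_forall_apply_eq {n d : ℕ} (hn : n ≤ d) (s : Finset (Fin n → ℤ))
    (hQ : ∀ x ∈ s, isQ x) (hd : ∀ x ∈ s, ∀ y ∈ s, x ≠ y → d ≤ d1 x y) (j : Fin n)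
    (hj : ∀ x ∈ s, ∀ y ∈ s, x j = y j) : #s ≤ d := by
  have hzero : ∑ x ∈ s, ∑ y ∈ s, |x j - y j| = 0 :=
    sum_eq_zero fun x hx => sum_eq_zero fun y hy => by simp [hj x hx y hy]
  have hupper : ∑ i, ∑ x ∈ s, ∑ y ∈ s, |x i - y i| ≤ ((n : ℤ) - 1) * #s ^ 2 := by
    rw [← add_sum_erase _ _ (mem_univ j), hzero, zero_add]
    calc _ ≤ ∑ _i ∈ univ.erase j, ((#s : ℤ) ^ 2) :=
          sum_le_sum fun i _ => sum_sum_abs_sub_le_card_sq s (· i) fun x hx => hQ x hx i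
      _ = ((n : ℤ) - 1) * #s ^ 2 := by
          rw [sum_const, card_erase_of_mem (mem_univ j), card_univ, Fintype.card_fin,
            nsmul_eq_mul, Nat.cast_pred j.pos]
  have hlower := card_mul_card_sub_one_mul_le_sum_sum_abs_sub d s hd
  have hnd : (n : ℤ) ≤ d := by exact_mod_cast hn
  have hs : (0 : ℤ) ≤ #s := by positivity
  suffices (#s : ℤ) ≤ d by exact_mod_cast this
  nlinarith

theorem sum_apply_sq_le {d : ℕ} (C : Finset (Fin d → ℤ)) (hQ : ∀ x ∈ C, isQ x)
    (hd : ∀ x ∈ C, ∀ y ∈ C, x ≠ y → d ≤ d1 x y) (j : Fin d) :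
    ∑ x ∈ C, x j ^ 2 ≤ 2 * (d : ℤ) := by
  have hcol : ∀ v : ℤ, #(C.filter (· j = v)) ≤ d := fun v =>
    card_le_of_forall_apply_eq le_rfl _ (fun x hx => hQ x (mem_filter.1 hx).1)
      (fun x hx y hy => hd x (mem_filter.1 hx).1 y (mem_filter.1 hy).1) j
      (fun x hx y hy => (mem_filter.1 hx).2.trans (mem_filter.1 hy).2.symm)
  have hsq : ∀ x ∈ C, x j ^ 2 = (if x j = -1 then 1 else 0) + (if x j = 1 then 1 else 0) :=
    fun x hx => by rcases hQ x hx j with h | h | h <;> simp [h]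
  rw [sum_congr rfl hsq, sum_add_distrib, sum_boole, sum_boole]
  have h₁ := hcol (-1)
  have h₂ := hcol 1
  omega

theorem card_mul_card_sub_one_le {d : ℕ} (C : Finset (Fin d → ℤ)) (hQ : ∀ x ∈ C, isQ x)
    (hd : ∀ x ∈ C, ∀ y ∈ C, x ≠ y → d ≤ d1 x y) (hM : 2 * d ≤ #C) :
    (#C : ℤ) * (#C - 1) ≤ 4 * d * (#C - d) := by
  obtain rfl | hd0 := Nat.eq_zero_or_pos d
  · have : #C ≤ 1 := card_le_one_of_subsingleton C
    interval_cases #C <;> norm_num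
  have hM' : 2 * (d : ℤ) ≤ #C := by exact_mod_cast hM
  have hcoord : ∀ j, ∑ x ∈ C, ∑ y ∈ C, |x j - y j| ≤ 4 * d * (#C - d) := by
    intro j
    have hσ := sum_apply_sq_le C hQ hd j
    have hσ0 : 0 ≤ ∑ x ∈ C, x j ^ 2 := sum_nonneg fun x _ => sq_nonneg _
    -- `2 M σ - σ² ≤ 4 d (M - d)` because `σ ≤ 2d ≤ M`
    nlinarith [sum_sum_abs_sub_le C (· j) fun x hx => hQ x hx j]
  have htotal : (#C : ℤ) * (#C - 1) * d ≤ 4 * d * (#C - d) * d :=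
    calc _ ≤ ∑ j, ∑ x ∈ C, ∑ y ∈ C, |x j - y j| :=
          card_mul_card_sub_one_mul_le_sum_sum_abs_sub d C hd
      _ ≤ ∑ _j : Fin d, 4 * (d : ℤ) * (#C - d) := sum_le_sum fun j _ => hcoord j
      _ = 4 * d * (#C - d) * d := by simp [mul_comm]
  exact le_of_mul_le_mul_right htotal (by exact_mod_cast hd0)

theorem le_two_mul_add_sqrt_of_mul_sub_one_le {M d : ℝ} (h : M * (M - 1) ≤ 4 * d * (M - d)) :
    M ≤ 2 * d + 1 / 2 + Real.sqrt (2 * d + 1 / 4) := by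
  have := Real.abs_le_sqrt (x := M - (2 * d + 1 / 2)) (y := 2 * d + 1 / 4) (by nlinarith)
  linarith [le_abs_self (M - (2 * d + 1 / 2))]

/-- `T(d,d) ≤ 2d + 1/2 + √(2d + 1/4)`: any code in `Q^d` with minimum `d₁`-distance
at least `d` has at most `2d + 1/2 + √(2d + 1/4)` codewords. -/
theorem stmt_17 (d : ℕ) (C : Finset (Fin d → ℤ))
    (hQ : ∀ x ∈ C, isQ x)
    (hd : ∀ x ∈ C, ∀ y ∈ C, x ≠ y → d ≤ d1 x y) :
    (C.card : ℝ) ≤ 2 * d + 1 / 2 + Real.sqrt (2 * d + 1 / 4) := by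
  rcases le_total C.card (2 * d) with hM | hM
  · have : (C.card : ℝ) ≤ 2 * d := by exact_mod_cast hM
    linarith [Real.sqrt_nonneg (2 * d + 1 / 4)]
  · refine le_two_mul_add_sqrt_of_mul_sub_one_le ?_
    exact_mod_cast card_mul_card_sub_one_le C hQ hd hM
end
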